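/- arXiv:2410.17641 — 4 statements merged into one kernel-verified Lean document; each statement's English description precedes it below -/
import Mathlib

section
/- If G' is obtained from a hedge graph G by contracting a hedge, then every hedge k-cut-set of G' is also a hedge k-cut-set of G. -/
/-- A hedge graph: a vertex set `V` and a family of hedges indexed by `E`,
each hedge being a collection of components (subsets of `V`). -/
structure HedgeGraph (V : Type*) (E : Type*) where
  comp : E → Finset (Finset V)

namespace HedgeGraph

variable {V E : Type*}

/-- A vertex is incident with a hedge if it lies in some component of the hedge. -/
def Incident (G : HedgeGraph V E) (v : V) (e : E) : Prop :=
  ∃ c ∈ G.comp e, v ∈ c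

/-- The degree of a vertex: the number of hedges it is incident to. -/
noncomputable def degree (G : HedgeGraph V E) (v : V) : ℕ :=
  {e | G.Incident v e}.ncard

/-- The size of a hedge: the number of vertices incident with it. -/
noncomputable def hedgeSize (G : HedgeGraph V E) (e : E) : ℕ :=
  {v | G.Incident v e}.ncard

/-- A hedge is cut by a partition `P` of the vertices into `k` parts if some
component of the hedge meets two different parts. -/
def CutsHedge {k : ℕ} (G : HedgeGraph V E) (P : V → Fin k) (e : E) : Prop :=
  ∃ c ∈ G.comp e, ∃ u ∈ c, ∃ w ∈ c, P u ≠ P w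

/-- The hedge `k`-cut-set associated with a `k`-cut `P`. -/
def cutSet {k : ℕ} (G : HedgeGraph V E) (P : V → Fin k) : Set E :=
  {e | G.CutsHedge P e}

/-- `C` is a hedge `k`-cut-set of `G` if it is the cut-set associated with some
partition of `V` into `k` nonempty parts. -/
def IsCutSetOf (G : HedgeGraph V E) (k : ℕ) (C : Set E) : Prop :=
  ∃ P : V → Fin k, Function.Surjective P ∧ C = G.cutSet P

end HedgeGraph

/-!
Pull a `k`-cut `P'` of `G'` back along the contraction map `π`. A hedge other than the contracted
one has as components in `G'` exactly the images of its components in `G`, so it is cut by `P'`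
iff it is cut by `P' ∘ π`. The contracted hedge is cut by neither: it has no components in `G'`,
and each of its components in `G` lies in a single fibre of `π`.
-/

namespace HedgeGraph

variable {V V' E : Type*} {k : ℕ}

theorem cutsHedge_comp_iff_of_comp_eq_image [DecidableEq V'] {G : HedgeGraph V E}
    {G' : HedgeGraph V' E} {π : V → V'} {e : E} (P : V' → Fin k)
    (h : G'.comp e = (G.comp e).image (Finset.image π)) :
    G.CutsHedge (P ∘ π) e ↔ G'.CutsHedge P e := by
  simp only [CutsHedge, h, Function.comp_apply]
  constructor
  · rintro ⟨c, hc, u, hu, w, hw, hne⟩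
    exact ⟨_, Finset.mem_image_of_mem _ hc, _, Finset.mem_image_of_mem _ hu,
      _, Finset.mem_image_of_mem _ hw, hne⟩
  · rintro ⟨c', hc', u', hu', w', hw', hne⟩
    obtain ⟨c, hc, rfl⟩ := Finset.mem_image.mp hc'
    obtain ⟨u, hu, rfl⟩ := Finset.mem_image.mp hu'
    obtain ⟨w, hw, rfl⟩ := Finset.mem_image.mp hw'
    exact ⟨c, hc, u, hu, w, hw, hne⟩

theorem not_cutsHedge_of_comp_eq_empty {G : HedgeGraph V E} {e : E} (P : V → Fin k)
    (h : G.comp e = ∅) : ¬ G.CutsHedge P e := by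
  rintro ⟨c, hc, -⟩
  simp [h] at hc

theorem not_cutsHedge_comp_of_forall_mem_comp {G : HedgeGraph V E} {π : V → V'} {e : E}
    (P : V' → Fin k) (h : ∀ c ∈ G.comp e, ∀ u ∈ c, ∀ w ∈ c, π u = π w) :
    ¬ G.CutsHedge (P ∘ π) e := by
  rintro ⟨c, hc, u, hu, w, hw, hne⟩
  exact hne (congrArg P (h c hc u hu w hw))

end HedgeGraph

open HedgeGraph in
/-- If `G'` is obtained from a hedge graph `G` by contracting a hedge `e₀`
(via the projection `π` identifying each component of `e₀` to a point), then
every hedge `k`-cut-set of `G'` is also a hedge `k`-cut-set of `G`. -/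
theorem cutSet_of_contraction {V V' E : Type*} [DecidableEq V']
    (G : HedgeGraph V E) (G' : HedgeGraph V' E) (e₀ : E)
    (π : V → V') (hπsurj : Function.Surjective π)
    (hπ : ∀ u v : V, π u = π v ↔ (u = v ∨ ∃ c ∈ G.comp e₀, u ∈ c ∧ v ∈ c))
    (he₀ : G'.comp e₀ = ∅)
    (hcomp : ∀ e : E, e ≠ e₀ → G'.comp e = (G.comp e).image (fun c => c.image π))
    (k : ℕ) (C : Set E) (hC : G'.IsCutSetOf k C) :
    G.IsCutSetOf k C := by
  obtain ⟨P', hP'surj, rfl⟩ := hC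
  refine ⟨P' ∘ π, hP'surj.comp hπsurj, Set.ext fun e => ?_⟩
  by_cases he : e = e₀
  · subst he
    have hfibre : ∀ c ∈ G.comp e, ∀ u ∈ c, ∀ w ∈ c, π u = π w :=
      fun c hc u hu w hw => (hπ u w).mpr (.inr ⟨c, hc, hu, hw⟩)
    exact iff_of_false (not_cutsHedge_of_comp_eq_empty P' he₀)
      (not_cutsHedge_comp_of_forall_mem_comp P' hfibre)
  · exact (cutsHedge_comp_iff_of_comp_eq_image P' (hcomp e he)).symm
end

section
/- Every hedge k-cut-set of size ℓ in an n-vertex hedge graph (n ≥ 2) can be specified by a choice of ℓ ordered pairs of distinct vertices: namely, there exist pairs (a_1,b_1),...,(a_ℓ,b_ℓ) such that the cut-set equals exactly the set of hedges having a component containing both a_i and b_i for some i. Consequently, the number of distinct hedge k-cut-sets of size ℓ is at most n^{2ℓ}. -/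
/-!
For each cut hedge pick two vertices of one of its components lying in different parts.
A hedge having a component that contains such a pair is cut, so these `ℓ` pairs recover the
cut-set exactly; hence cut-sets of size `ℓ` are the image of the `n ^ (2ℓ)` pair sequences.
-/

namespace HedgeGraph

variable {V E : Type*}

def hedgesJoining {ι : Type*} (G : HedgeGraph V E) (a b : ι → V) : Set E :=
  {e | ∃ i, ∃ c ∈ G.comp e, a i ∈ c ∧ b i ∈ c}

theorem hedgesJoining_comp_of_surjective {ι κ : Type*} (G : HedgeGraph V E) (a b : κ → V)
    {σ : ι → κ} (hσ : Function.Surjective σ) :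
    G.hedgesJoining (a ∘ σ) (b ∘ σ) = G.hedgesJoining a b := by
  ext e
  constructor
  · rintro ⟨i, c, hc, hac, hbc⟩
    exact ⟨σ i, c, hc, hac, hbc⟩
  · rintro ⟨j, c, hc, hac, hbc⟩
    obtain ⟨i, rfl⟩ := hσ j
    exact ⟨i, c, hc, hac, hbc⟩

theorem hedgesJoining_subset_cutSet {ι : Type*} {k : ℕ} (G : HedgeGraph V E) (P : V → Fin k)
    {a b : ι → V} (hab : ∀ i, P (a i) ≠ P (b i)) : G.hedgesJoining a b ⊆ G.cutSet P := by
  rintro e ⟨i, c, hc, hac, hbc⟩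
  exact ⟨c, hc, a i, hac, b i, hbc, hab i⟩

theorem exists_pairs_cutSet_eq_hedgesJoining {k : ℕ} (G : HedgeGraph V E) (P : V → Fin k) :
    ∃ a b : G.cutSet P → V, (∀ e, P (a e) ≠ P (b e)) ∧ G.cutSet P = G.hedgesJoining a b := by
  choose c hc a ha b hb hab using fun e : G.cutSet P => e.2
  refine ⟨a, b, hab, subset_antisymm ?_ (G.hedgesJoining_subset_cutSet P hab)⟩
  intro e he
  exact ⟨⟨e, he⟩, c ⟨e, he⟩, hc _, ha _, hb _⟩

theorem exists_fin_pairs_cutSet_eq_hedgesJoining [Finite E] {k ℓ : ℕ} (G : HedgeGraph V E)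
    (P : V → Fin k) (hℓ : (G.cutSet P).ncard = ℓ) :
    ∃ a b : Fin ℓ → V, (∀ i, P (a i) ≠ P (b i)) ∧ G.cutSet P = G.hedgesJoining a b := by
  obtain ⟨a, b, hab, hcut⟩ := G.exists_pairs_cutSet_eq_hedgesJoining P
  let σ : Fin ℓ ≃ G.cutSet P := (Finite.equivFinOfCardEq hℓ).symm
  exact ⟨a ∘ σ, b ∘ σ, fun i => hab (σ i),
    hcut.trans (G.hedgesJoining_comp_of_surjective a b σ.surjective).symm⟩

theorem ncard_setOf_isCutSetOf_le [Fintype V] [Finite E] (G : HedgeGraph V E) (k ℓ : ℕ) :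
    {C : Set E | G.IsCutSetOf k C ∧ C.ncard = ℓ}.ncard ≤ Fintype.card V ^ (2 * ℓ) := by
  let specify : (Fin ℓ → V) × (Fin ℓ → V) → Set E := fun ab => G.hedgesJoining ab.1 ab.2
  have hsub : {C : Set E | G.IsCutSetOf k C ∧ C.ncard = ℓ} ⊆ Set.range specify := by
    rintro C ⟨⟨P, -, rfl⟩, hℓ⟩
    obtain ⟨a, b, -, hcut⟩ := G.exists_fin_pairs_cutSet_eq_hedgesJoining P hℓ
    exact ⟨(a, b), hcut.symm⟩
  calc {C : Set E | G.IsCutSetOf k C ∧ C.ncard = ℓ}.ncard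
      ≤ (Set.range specify).ncard := Set.ncard_le_ncard hsub (Set.toFinite _)
    _ ≤ Nat.card ((Fin ℓ → V) × (Fin ℓ → V)) := by
        rw [← Nat.card_coe_set_eq]; exact Finite.card_range_le specify
    _ = Fintype.card V ^ (2 * ℓ) := by
        simp [Nat.card_eq_fintype_card, ← pow_add, two_mul]

end HedgeGraph

open HedgeGraph in
theorem cutSet_specified_by_pairs_general {V E : Type*} [Fintype V] [Fintype E]
    (G : HedgeGraph V E) (n k ℓ : ℕ) (hn : Fintype.card V = n) :
    (∀ C : Set E, G.IsCutSetOf k C → C.ncard = ℓ →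
      ∃ a b : Fin ℓ → V, (∀ i, a i ≠ b i) ∧
        C = {e | ∃ i, ∃ c ∈ G.comp e, a i ∈ c ∧ b i ∈ c}) ∧
    {C : Set E | G.IsCutSetOf k C ∧ C.ncard = ℓ}.ncard ≤ n ^ (2 * ℓ) := by
  refine ⟨?_, hn ▸ G.ncard_setOf_isCutSetOf_le k ℓ⟩
  rintro C ⟨P, -, rfl⟩ hℓ
  obtain ⟨a, b, hab, hcut⟩ := G.exists_fin_pairs_cutSet_eq_hedgesJoining P hℓ
  exact ⟨a, b, fun i h => hab i (congrArg P h), hcut⟩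

open HedgeGraph in
/-- Every hedge `k`-cut-set of size `ℓ` is specified by `ℓ` ordered pairs of
distinct vertices; consequently there are at most `n ^ (2ℓ)` such cut-sets. -/
theorem cutSet_specified_by_pairs {V E : Type*} [Fintype V] [Fintype E]
    (G : HedgeGraph V E) (n k ℓ : ℕ) (hn : Fintype.card V = n) (h2 : 2 ≤ n) :
    (∀ C : Set E, G.IsCutSetOf k C → C.ncard = ℓ →
      ∃ a b : Fin ℓ → V, (∀ i, a i ≠ b i) ∧
        C = {e | ∃ i, ∃ c ∈ G.comp e, a i ∈ c ∧ b i ∈ c}) ∧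
    {C : Set E | G.IsCutSetOf k C ∧ C.ncard = ℓ}.ncard ≤ n ^ (2 * ℓ) :=
  cutSet_specified_by_pairs_general G n k ℓ hn
end

section
/- Let G be a simple graph on n ≥ 2k+1 vertices and k ≥ 1. Construct a hedge graph G' with vertex set V(G) ∪ {v_e : e ∈ E(G)}, with a hedge N_x = {{x} ∪ {v_{xy} : y ∈ N_G(x)}} for each x ∈ V(G), and a hedge {{x,y}} for each pair of distinct x, y ∈ V(G). Set ℓ = k and h = C(k,2) + 1. Then G contains a clique of size k if and only if G' admits a hedge h-cut whose cut-set has size at most ℓ. -/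
/-- The hedge graph `G'` of the W[1]-hardness reduction: its vertices are the
vertices of `G` together with a vertex `v_e` for each edge `e` of `G`; for each
`x ∈ V(G)` there is a hedge with the single component `{x} ∪ {v_{xy} : y ∈ N_G(x)}`,
and for each pair `{x, y}` of distinct vertices of `G` there is a hedge with the
single component `{x, y}`. -/
def reductionHedgeGraph {V : Type*} [Fintype V] [DecidableEq V]
    (G : SimpleGraph V) [DecidableRel G.Adj] :
    HedgeGraph (V ⊕ G.edgeSet) (V ⊕ {t : Finset V // t.card = 2}) where
  comp := fun e => match e with
    | Sum.inl x => {insert (Sum.inl x)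
        ((Finset.univ.filter (fun e : G.edgeSet => x ∈ (e : Sym2 V))).image Sum.inr)}
    | Sum.inr t => {t.val.image Sum.inl}


/-! A `k`-clique `s` yields the `(C(k,2)+1)`-cut that puts every vertex of `G`, and every edge
vertex outside `s`, into one part and each of the `C(k,2)` edges of `s` into a part of its own:
only the `k` vertex hedges of `s` are cut.

Conversely, if some cut with at most `k` cut hedges separated two vertices `a`, `b` of `G`, then
each `c ≠ a` would be separated from `a` or from `b`, cutting at least `n - 1 > k` pair hedges.
So `V(G)` lies in one part, the other `C(k,2)` parts contain only edge vertices, and the endpoints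
of those edges are exactly the vertices whose hedges are cut: at most `k` vertices spanning at
least `C(k,2)` edges, which forces a `k`-clique. -/

open Finset

theorem Nat.choose_two_lt_choose_two {m k : ℕ} (hk : 2 ≤ k) (h : m < k) :
    m.choose 2 < k.choose 2 := by
  obtain ⟨j, rfl⟩ : ∃ j, k = j + 1 := ⟨k - 1, by omega⟩
  have hmj := Nat.choose_le_choose 2 (Nat.le_of_lt_succ h)
  have hj : (j + 1).choose 2 = j + j.choose 2 := by
    rw [Nat.choose_succ_succ', Nat.choose_one_right]
  omega

theorem Finset.card_filter_not_isDiag_sym2 {α : Type*} [DecidableEq α] (s : Finset α) :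
    #{e ∈ s.sym2 | ¬e.IsDiag} = (#s).choose 2 := by
  rw [sym2_eq_image, Sym2.filter_image_mk_not_isDiag, Sym2.card_image_offDiag]

theorem Finset.exists_pair_ne_on_insert_iff {α β : Type*} [DecidableEq α] {f : α → β} {z : α}
    {T : Finset α} :
    (∃ u ∈ insert z T, ∃ w ∈ insert z T, f u ≠ f w) ↔ ∃ w ∈ T, f w ≠ f z := by
  constructor
  · rintro ⟨u, hu, w, hw, hne⟩
    by_cases hwz : f w = f z
    · exact ⟨u, (mem_insert.1 hu).resolve_left (by rintro rfl; exact hne hwz.symm), hwz ▸ hne⟩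
    · exact ⟨w, (mem_insert.1 hw).resolve_left (by rintro rfl; exact hwz rfl), hwz⟩
  · rintro ⟨w, hw, hne⟩
    exact ⟨w, mem_insert_of_mem hw, z, mem_insert_self z T, hne⟩

namespace SimpleGraph

variable {V : Type*} {G : SimpleGraph V} {s : Finset V} {k : ℕ}

theorem IsClique.mem_edgeSet_of_mem_sym2 (hs : G.IsClique s) {e : Sym2 V}
    (he : e ∈ s.sym2) (hd : ¬e.IsDiag) : e ∈ G.edgeSet := by
  induction e using Sym2.ind with
  | _ a b =>
    rw [mk_mem_sym2_iff] at he
    exact hs he.1 he.2 (by simpa using hd)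

theorem exists_isNClique_of_le_one [Fintype V] (hk : k ≤ 1) (hkV : k ≤ Fintype.card V) :
    ∃ s : Finset V, G.IsNClique k s := by
  obtain ⟨s, -, hs⟩ := exists_subset_card_eq (s := (univ : Finset V)) hkV
  exact ⟨s, IsClique.of_subsingleton (card_le_one_iff_subsingleton.1 (hs ▸ hk)), hs⟩

theorem isNClique_of_choose_two_le_card [DecidableEq V] {F : Finset (Sym2 V)} (hk : 2 ≤ k)
    (hs : #s ≤ k) (hFs : ∀ e ∈ F, e ∈ s.sym2) (hFG : ∀ e ∈ F, e ∈ G.edgeSet)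
    (hF : k.choose 2 ≤ #F) :
    G.IsNClique k s := by
  have hF_sub : F ⊆ {e ∈ s.sym2 | ¬e.IsDiag} := fun e he =>
    mem_filter.2 ⟨hFs e he, G.not_isDiag_of_mem_edgeSet (hFG e he)⟩
  have hF_le : #F ≤ (#s).choose 2 := card_filter_not_isDiag_sym2 s ▸ card_le_card hF_sub
  have hsk : #s = k := by
    by_contra hne
    have := Nat.choose_two_lt_choose_two hk (lt_of_le_of_ne hs hne)
    omega
  have hF_eq : F = {e ∈ s.sym2 | ¬e.IsDiag} :=
    eq_of_subset_of_card_le hF_sub (by rw [card_filter_not_isDiag_sym2, hsk]; exact hF)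
  refine ⟨fun x hx y hy hxy => G.mem_edgeSet.1 (hFG s(x, y) ?_), hsk⟩
  rw [hF_eq, mem_filter, mk_mem_sym2_iff, Sym2.mk_isDiag_iff]
  exact ⟨⟨hx, hy⟩, hxy⟩

end SimpleGraph

namespace reductionHedgeGraph

open HedgeGraph Sum

variable {V : Type*} [Fintype V] [DecidableEq V] {G : SimpleGraph V} [DecidableRel G.Adj]
  {m : ℕ} {P : V ⊕ G.edgeSet → Fin m}

theorem cutsHedge_inl_iff {x : V} :
    (reductionHedgeGraph G).CutsHedge P (inl x) ↔
      ∃ e : G.edgeSet, x ∈ (e : Sym2 V) ∧ P (inr e) ≠ P (inl x) := by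
  simp only [CutsHedge, reductionHedgeGraph, mem_singleton, exists_eq_left,
    exists_pair_ne_on_insert_iff]
  simp

theorem cutsHedge_inr_iff {t : {t : Finset V // t.card = 2}} :
    (reductionHedgeGraph G).CutsHedge P (inr t) ↔
      ∃ a ∈ t.1, ∃ b ∈ t.1, P (inl a) ≠ P (inl b) := by
  simp [CutsHedge, reductionHedgeGraph]

theorem cutSet_eq_image_inl {p : Fin m} (hP : ∀ x, P (inl x) = p) :
    (reductionHedgeGraph G).cutSet P =
      inl '' {x | ∃ e : G.edgeSet, x ∈ (e : Sym2 V) ∧ P (inr e) ≠ p} := by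
  ext (x | t)
  · simp [cutSet, cutsHedge_inl_iff, hP]
  · simp [cutSet, cutsHedge_inr_iff, hP]

theorem card_le_ncard_cutSet_add_one {a b : V} (hab : P (inl a) ≠ P (inl b)) :
    Fintype.card V ≤ ((reductionHedgeGraph G).cutSet P).ncard + 1 := by
  let partner (c : V) : V := if P (inl c) = P (inl a) then b else a
  have hpartner_mem (c : V) : partner c = a ∨ partner c = b := by
    unfold partner; split_ifs <;> simp
  have hpartner_ne (c : V) : P (inl (partner c)) ≠ P (inl c) := by
    unfold partner; split_ifs with h
    · exact h ▸ hab.symm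
    · exact Ne.symm h
  let pair (c : V) : {t : Finset V // t.card = 2} :=
    ⟨{partner c, c}, card_pair fun h => hpartner_ne c (by rw [h])⟩
  have hcut (c : V) : (reductionHedgeGraph G).CutsHedge P (inr (pair c)) :=
    cutsHedge_inr_iff.2 ⟨partner c, by simp [pair], c, by simp [pair], hpartner_ne c⟩
  have hinj : Set.InjOn pair {a}ᶜ := by
    intro c hc c' hc' hcc
    rw [Set.mem_compl_singleton_iff] at hc hc'
    have hval : ({partner c, c} : Finset V) = {partner c', c'} := congrArg Subtype.val hcc
    by_contra hne
    have h₁ : c = partner c' := by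
      have : c ∈ ({partner c', c'} : Finset V) := hval ▸ by simp
      simpa [hne] using this
    have h₂ : c' = partner c := by
      have : c' ∈ ({partner c, c} : Finset V) := hval ▸ by simp
      simpa [Ne.symm hne] using this
    -- both `c` and `c'` are partners, hence lie in `{a, b}` and differ from `a`
    have hcb : c = b := h₁.trans ((hpartner_mem c').resolve_left (h₁ ▸ hc))
    have hc'b : c' = b := h₂.trans ((hpartner_mem c).resolve_left (h₂ ▸ hc'))
    exact hne (hcb.trans hc'b.symm)
  have := Set.ncard_le_ncard_of_injOn (fun c => inr (pair c)) (fun c _ => hcut c)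
    (fun c hc c' hc' h => hinj hc hc' (inr_injective h)) (s := ({a}ᶜ : Set V))
    (t := (reductionHedgeGraph G).cutSet P)
  rw [Set.ncard_compl, Set.ncard_singleton, Nat.card_eq_fintype_card] at this
  omega

theorem exists_isCutSetOf_of_isNClique [Nonempty V] {k : ℕ} {s : Finset V}
    (hs : G.IsNClique k s) :
    ∃ C, (reductionHedgeGraph G).IsCutSetOf (k.choose 2 + 1) C ∧ C.ncard ≤ k := by
  let pairs := {e ∈ s.sym2 | ¬e.IsDiag}
  let idx : pairs ≃ Fin (k.choose 2) :=
    pairs.equivFin.trans (finCongr (by rw [card_filter_not_isDiag_sym2, hs.card_eq]))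
  let P : V ⊕ G.edgeSet → Fin (k.choose 2 + 1) :=
    Sum.elim 0 fun e => if h : (e : Sym2 V) ∈ pairs then (idx ⟨e, h⟩).succ else 0
  refine ⟨_, ⟨P, fun i => ?_, rfl⟩, ?_⟩
  · induction i using Fin.cases with
    | zero => exact ⟨inl (Classical.arbitrary V), rfl⟩
    | succ i =>
      have he := mem_filter.1 (idx.symm i).2
      exact ⟨inr ⟨_, hs.isClique.mem_edgeSet_of_mem_sym2 he.1 he.2⟩, by simp [P]⟩
  · rw [cutSet_eq_image_inl (p := 0) fun _ => rfl]
    calc _ ≤ (inl '' (s : Set V)).ncard := by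
          refine Set.ncard_le_ncard (Set.image_mono ?_)
          rintro x ⟨e, hxe, he⟩
          have : (e : Sym2 V) ∈ pairs := by
            by_contra h
            simp [P, h] at he
          exact mem_sym2_iff.1 (mem_filter.1 this).1 x hxe
      _ = k := by
          rw [Set.ncard_image_of_injective _ inl_injective, Set.ncard_coe_finset, hs.card_eq]

theorem exists_isNClique_of_isCutSetOf {k : ℕ} (hk : 2 ≤ k) (hV : k + 1 < Fintype.card V)
    {C : Set (V ⊕ {t : Finset V // t.card = 2})}
    (hC : (reductionHedgeGraph G).IsCutSetOf (k.choose 2 + 1) C) (hCk : C.ncard ≤ k) :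
    ∃ s : Finset V, G.IsNClique k s := by
  obtain ⟨P, hP, rfl⟩ := hC
  obtain ⟨v⟩ : Nonempty V := Fintype.card_pos_iff.1 (by omega)
  have hconst : ∀ x, P (inl x) = P (inl v) := fun x => by
    by_contra h
    have := card_le_ncard_cutSet_add_one h
    omega
  set p := P (inl v)
  let S : Finset V := {x | ∃ e : G.edgeSet, x ∈ (e : Sym2 V) ∧ P (inr e) ≠ p}
  let F : Finset G.edgeSet := {e | P (inr e) ≠ p}
  have hS : #S ≤ k := by
    rw [cutSet_eq_image_inl hconst, Set.ncard_image_of_injective _ inl_injective] at hCk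
    simpa [S, ← Set.ncard_coe_finset] using hCk
  have hF : k.choose 2 ≤ #F := by
    have := card_le_card_of_surjOn (fun e => P (inr e)) (s := F) (t := univ.erase p) ?_
    · simpa using this
    intro i hi
    obtain ⟨x | e, rfl⟩ := hP i
    · exact absurd (hconst x) (ne_of_mem_erase hi)
    · exact ⟨e, by simpa [F] using ne_of_mem_erase hi, rfl⟩
  refine ⟨S, SimpleGraph.isNClique_of_choose_two_le_card hk hS
    (F := F.map (Function.Embedding.subtype _)) ?_ ?_ (by simpa using hF)⟩
  · simp only [mem_map, Function.Embedding.subtype_apply]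
    rintro _ ⟨e, he, rfl⟩
    exact mem_sym2_iff.2 fun x hx => mem_filter.2 ⟨mem_univ x, e, hx, (mem_filter.1 he).2⟩
  · simp only [mem_map, Function.Embedding.subtype_apply]
    rintro _ ⟨e, -, rfl⟩
    exact e.2

end reductionHedgeGraph

open HedgeGraph in
theorem clique_iff_small_hedge_cut_general {V : Type*} [Fintype V] [DecidableEq V]
    (G : SimpleGraph V) [DecidableRel G.Adj] (n k : ℕ)
    (hn : Fintype.card V = n) (hnk : 2 * k + 1 ≤ n) :
    (∃ s : Finset V, G.IsNClique k s) ↔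
      ∃ C : Set (V ⊕ {t : Finset V // t.card = 2}),
        (reductionHedgeGraph G).IsCutSetOf (k.choose 2 + 1) C ∧ C.ncard ≤ k := by
  constructor
  · rintro ⟨s, hs⟩
    have : Nonempty V := Fintype.card_pos_iff.1 (by omega)
    exact reductionHedgeGraph.exists_isCutSetOf_of_isNClique hs
  · rintro ⟨C, hC, hCk⟩
    rcases le_or_gt k 1 with hk | hk
    · exact SimpleGraph.exists_isNClique_of_le_one hk (by omega)
    · exact reductionHedgeGraph.exists_isNClique_of_isCutSetOf hk (by omega) hC hCk

open HedgeGraph in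
/-- `G` has a clique of size `k` iff the reduction hedge graph admits a hedge
`h`-cut-set of size at most `ℓ = k`, where `h = C(k,2) + 1`. -/
theorem clique_iff_small_hedge_cut {V : Type*} [Fintype V] [DecidableEq V]
    (G : SimpleGraph V) [DecidableRel G.Adj] (n k : ℕ)
    (hn : Fintype.card V = n) (hk : 1 ≤ k) (hnk : 2 * k + 1 ≤ n) :
    (∃ s : Finset V, G.IsNClique k s) ↔
      ∃ C : Set (V ⊕ {t : Finset V // t.card = 2}),
        (reductionHedgeGraph G).IsCutSetOf (k.choose 2 + 1) C ∧ C.ncard ≤ k :=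
  clique_iff_small_hedge_cut_general G n k hn hnk
end

section
/- In the reduction hedge graph G' from a graph G on n ≥ 2k+1 vertices (as in the W[1]-hardness proof), in any hedge h-cut (V_1,...,V_h) whose cut-set has size at most k, all original vertices V(G) lie in the same part. That is, if some part contains p original vertices with 1 ≤ p < n, then the cut-set contains at least p(n-p) ≥ n-1 > k pairwise-hedges, a contradiction. -/
open Finset

theorem card_image_pair_product_of_disjoint {V : Type*} [DecidableEq V] {S T : Finset V}
    (h : Disjoint S T) :
    #((S ×ˢ T).image fun p : V × V => ({p.1, p.2} : Finset V)) = #S * #T := by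
  rw [card_image_of_injOn, card_product]
  rintro ⟨u, w⟩ huw ⟨u', w'⟩ huw' heq
  simp only [coe_product, Set.mem_prod, mem_coe] at huw huw' heq
  have hu : u ∈ ({u', w'} : Finset V) := heq ▸ mem_insert_self u {w}
  have hw : w ∈ ({u', w'} : Finset V) := heq ▸ mem_insert_of_mem (mem_singleton_self w)
  rw [mem_insert, mem_singleton] at hu hw
  obtain rfl : u = u' := hu.resolve_right (h.forall_ne_finset huw.1 huw'.2)
  obtain rfl : w = w' := hw.resolve_left (h.forall_ne_finset huw.1 huw.2).symm
  rfl

theorem reductionHedgeGraph_cutsHedge_pair {V : Type*} [Fintype V] [DecidableEq V]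
    (G : SimpleGraph V) [DecidableRel G.Adj] {m : ℕ} (P : (V ⊕ G.edgeSet) → Fin m)
    (t : {t : Finset V // t.card = 2}) {u w : V} (hu : u ∈ t.val) (hw : w ∈ t.val)
    (huw : P (Sum.inl u) ≠ P (Sum.inl w)) :
    (reductionHedgeGraph G).CutsHedge P (Sum.inr t) :=
  ⟨t.val.image Sum.inl, mem_singleton_self _, Sum.inl u, mem_image_of_mem _ hu,
    Sum.inl w, mem_image_of_mem _ hw, huw⟩

theorem card_mul_card_compl_le_ncard_cutSet {V : Type*} [Fintype V] [DecidableEq V]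
    (G : SimpleGraph V) [DecidableRel G.Adj] {m : ℕ} (P : (V ⊕ G.edgeSet) → Fin m)
    (S : Finset V) (hS : ∀ u ∈ S, ∀ w ∉ S, P (Sum.inl u) ≠ P (Sum.inl w)) :
    #S * #Sᶜ ≤ ((reductionHedgeGraph G).cutSet P).ncard := by
  set pairs := (S ×ˢ Sᶜ).image fun p : V × V => ({p.1, p.2} : Finset V)
  have hpairs : ∀ t ∈ pairs, t.card = 2 := by
    simp only [pairs, mem_image, mem_product, mem_compl, Prod.exists]
    rintro _ ⟨u, w, ⟨hu, hw⟩, rfl⟩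
    exact card_pair (ne_of_mem_of_not_mem hu hw)
  have hsub : (((pairs.subtype (·.card = 2)).map .inr :
      Finset (V ⊕ {t : Finset V // t.card = 2})) : Set _) ⊆
      (reductionHedgeGraph G).cutSet P := by
    simp only [coe_map, Set.image_subset_iff]
    rintro ⟨t, ht⟩ htp
    simp only [mem_coe, mem_subtype, pairs, mem_image, mem_product, mem_compl,
      Prod.exists] at htp
    obtain ⟨u, w, ⟨hu, hw⟩, rfl⟩ := htp
    exact reductionHedgeGraph_cutsHedge_pair G P _ (mem_insert_self u {w})
      (mem_insert_of_mem (mem_singleton_self w)) (hS u hu w hw)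
  calc #S * #Sᶜ = #pairs := (card_image_pair_product_of_disjoint disjoint_compl_right).symm
    _ = #((pairs.subtype (·.card = 2)).map .inr) := by
      rw [card_map, card_subtype, filter_true_of_mem hpairs]
    _ ≤ _ := by
      rw [← Set.ncard_coe_finset]
      exact Set.ncard_le_ncard hsub (Set.toFinite _)

open HedgeGraph in
theorem original_vertices_in_same_part_general {V : Type*} [Fintype V] [DecidableEq V]
    (G : SimpleGraph V) [DecidableRel G.Adj] (n k : ℕ)
    (hn : Fintype.card V = n) (hnk : 2 * k + 1 ≤ n)
    (P : (V ⊕ G.edgeSet) → Fin (k.choose 2 + 1))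
    (hcut : ((reductionHedgeGraph G).cutSet P).ncard ≤ k) :
    ∀ x y : V, P (Sum.inl x) = P (Sum.inl y) := by
  intro x y
  by_contra hxy
  set S := univ.filter fun v => P (Sum.inl v) = P (Sum.inl x)
  have hS : ∀ u ∈ S, ∀ w ∉ S, P (Sum.inl u) ≠ P (Sum.inl w) := by
    simp only [S, mem_filter, mem_univ, true_and]
    intro u hu w hw
    rwa [hu, ne_comm]
  have hcross := card_mul_card_compl_le_ncard_cutSet G P S hS
  have hx : 0 < #S := card_pos.2 ⟨x, by simp [S]⟩
  have hy : 0 < #Sᶜ := card_pos.2 ⟨y, by simpa [S, eq_comm] using hxy⟩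
  have hsum : #S + #Sᶜ = n := by rw [card_add_card_compl, hn]
  -- `p * q ≥ p + q - 1 = n - 1 ≥ 2 * k` for `p, q ≥ 1`
  nlinarith

open HedgeGraph in
/-- In any hedge `h`-cut of the reduction graph (with `h = C(k,2) + 1`) whose
cut-set has size at most `k`, all original vertices of `G` lie in the same part. -/
theorem original_vertices_in_same_part {V : Type*} [Fintype V] [DecidableEq V]
    (G : SimpleGraph V) [DecidableRel G.Adj] (n k : ℕ)
    (hn : Fintype.card V = n) (hk : 1 ≤ k) (hnk : 2 * k + 1 ≤ n)
    (P : (V ⊕ G.edgeSet) → Fin (k.choose 2 + 1)) (hP : Function.Surjective P)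
    (hcut : ((reductionHedgeGraph G).cutSet P).ncard ≤ k) :
    ∀ x y : V, P (Sum.inl x) = P (Sum.inl y) :=
  original_vertices_in_same_part_general G n k hn hnk P hcut
end
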